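/- arXiv:2401.01648 — 3 statements merged into one kernel-verified Lean document; each statement's English description precedes it below -/
import Mathlib

section
/- The space ω* = βℕ ∖ ℕ, i.e., the Stone–Čech remainder of the countable discrete space ℕ with the subspace topology inherited from βℕ, is DRC but not DRS_ω. Consequently, DRC does not imply DRS_ω. -/
/-!
Every point `pure n` is isolated in `βℕ = Ultrafilter ℕ`, so `ω*` is closed in the compact space
`βℕ`, hence compact, and `ω*` itself is a dense relatively countably compact subset.

For DRS_ω, fix pairwise disjoint infinite sets `Sₙ ⊆ ℕ`. The clopen set `{u | Sₙ ∈ u}` meets `ω*`,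
so each dense `Dₙ` contains some `dₙ` with `Sₙ ∈ dₙ`. If `d ∘ φ → u`, then, since `{w | A ∈ w}` is
closed, `u` contains both `⋃ₖ S_{φ(2k)}` and `⋃ₖ S_{φ(2k+1)}`, which are disjoint.
-/

/-- The set of accumulation points of a sequence `a : ℕ → X`. -/
def accSeq {X : Type*} [TopologicalSpace X] (a : ℕ → X) : Set X :=
  {x | ∀ U : Set X, IsOpen U → x ∈ U → {n : ℕ | a n ∈ U}.Infinite}

/-- `Y` is relatively countably compact in `X` iff every sequence in `Y`
has an accumulation point in `X`. -/
def RelCountablyCompactIn {X : Type*} [TopologicalSpace X] (Y : Set X) : Prop :=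
  ∀ y : ℕ → X, (∀ n, y n ∈ Y) → (accSeq y).Nonempty

/-- `X` is DRC iff it has a dense, relatively countably compact subset. -/
def IsDRC (X : Type*) [TopologicalSpace X] : Prop :=
  ∃ D : Set X, Dense D ∧ RelCountablyCompactIn D

/-- `X` is DRS_ω iff there is a sequence `⟨D_n : n ∈ ℕ⟩` of dense subsets of `X` such that
every sequence `⟨d_n⟩` with `d_n ∈ D_n` has a subsequence converging to some point of `X`. -/
def IsDRSomega (X : Type*) [TopologicalSpace X] : Prop :=
  ∃ D : ℕ → Set X, (∀ n, Dense (D n)) ∧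
    ∀ d : ℕ → X, (∀ n, d n ∈ D n) →
      ∃ (x : X) (φ : ℕ → ℕ), StrictMono φ ∧ Filter.Tendsto (d ∘ φ) Filter.atTop (nhds x)

/-- `ω* = βℕ ∖ ℕ`, the Stone–Čech remainder of the countable discrete space `ℕ`,
realized as the subspace of nonprincipal ultrafilters of the space `Ultrafilter ℕ`
(which is the Stone–Čech compactification of the discrete space `ℕ`, with `ℕ`
embedded via `pure`). -/
def omegaStar : Type := {u : Ultrafilter ℕ // u ∉ Set.range (pure : ℕ → Ultrafilter ℕ)}

instance : TopologicalSpace omegaStar :=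
  instTopologicalSpaceSubtype

open Filter Function Set Topology

theorem mem_accSeq_iff_mapClusterPt {X : Type*} [TopologicalSpace X] {a : ℕ → X} {x : X} :
    x ∈ accSeq a ↔ MapClusterPt x cofinite a := by
  simp only [(nhds_basis_opens x).mapClusterPt_iff_frequently, frequently_cofinite_iff_infinite]
  exact ⟨fun h U ⟨hxU, hU⟩ => h U hU hxU, fun h U hU hxU => h U ⟨hxU, hU⟩⟩

theorem relCountablyCompactIn_of_compactSpace {X : Type*} [TopologicalSpace X] [CompactSpace X]
    (Y : Set X) : RelCountablyCompactIn Y := fun y _ =>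
  (exists_clusterPt_of_compactSpace (map y cofinite)).imp fun _ => mem_accSeq_iff_mapClusterPt.2

theorem isDRC_of_compactSpace (X : Type*) [TopologicalSpace X] [CompactSpace X] : IsDRC X :=
  ⟨univ, dense_univ, relCountablyCompactIn_of_compactSpace univ⟩

namespace Ultrafilter

variable {α : Type*}

theorem range_pure_eq_iUnion : range (pure : α → Ultrafilter α) = ⋃ a, {u | {a} ∈ u} := by
  ext u
  simp only [mem_range, mem_iUnion, mem_ofPred_eq]
  constructor
  · rintro ⟨a, rfl⟩
    exact ⟨a, mem_pure.2 rfl⟩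
  · rintro ⟨a, ha⟩
    obtain ⟨b, rfl, hb⟩ := eq_pure_of_finite_mem (finite_singleton a) ha
    exact ⟨b, hb.symm⟩

theorem isOpen_range_pure : IsOpen (range (pure : α → Ultrafilter α)) :=
  range_pure_eq_iUnion ▸ isOpen_iUnion fun a => ultrafilter_isOpen_basic {a}

theorem iUnion_mem_of_tendsto {z : ℕ → Ultrafilter α} {u : Ultrafilter α}
    (hz : Tendsto z atTop (𝓝 u)) {S : ℕ → Set α} (hS : ∀ n, S n ∈ z n) {p : ℕ → Prop}
    (hp : ∃ᶠ n in atTop, p n) : (⋃ (n) (_ : p n), S n) ∈ u :=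
  (ultrafilter_isClosed_basic _).mem_of_frequently_of_tendsto
    (hp.mono fun n hn => mem_of_superset (hS n) (subset_biUnion_of_mem (u := S) hn)) hz

theorem not_tendsto_of_pairwise_disjoint {z : ℕ → Ultrafilter α} {S : ℕ → Set α}
    (hS : Pairwise (Disjoint on S)) (hz : ∀ n, S n ∈ z n) (u : Ultrafilter α) :
    ¬ Tendsto z atTop (𝓝 u) := by
  intro h
  have hdisj : Disjoint (⋃ (n) (_ : Even n), S n) (⋃ (m) (_ : Odd m), S m) :=
    disjoint_iUnion₂_left.2 fun n hn => disjoint_iUnion₂_right.2 fun m hm =>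
      hS fun hnm => Nat.not_even_iff_odd.2 hm (hnm ▸ hn)
  exact u.empty_notMem <| hdisj.inter_eq ▸
    inter_mem (iUnion_mem_of_tendsto h hz Nat.frequently_even)
      (iUnion_mem_of_tendsto h hz Nat.frequently_odd)

end Ultrafilter

namespace omegaStar

instance : CompactSpace omegaStar :=
  isCompact_iff_compactSpace.1 Ultrafilter.isOpen_range_pure.isClosed_compl.isCompact

theorem isOpen_setOf_mem (s : Set ℕ) : IsOpen {u : omegaStar | s ∈ u.1} :=
  (ultrafilter_isOpen_basic s).preimage continuous_subtype_val

theorem exists_mem_of_infinite {s : Set ℕ} (hs : s.Infinite) : ∃ u : omegaStar, s ∈ u.1 := by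
  have := hs.cofinite_inf_principal_neBot
  set v := Ultrafilter.of (cofinite ⊓ 𝓟 s)
  refine ⟨⟨v, ?_⟩, Ultrafilter.of_le _ (mem_inf_of_right (mem_principal_self s))⟩
  rintro ⟨a, ha⟩
  have hcompl : {a}ᶜ ∈ v :=
    Ultrafilter.of_le _ (mem_inf_of_left (finite_singleton a).compl_mem_cofinite)
  rw [← ha, Ultrafilter.mem_pure] at hcompl
  exact hcompl rfl

theorem not_isDRSomega : ¬ IsDRSomega omegaStar := by
  rintro ⟨D, hD, hconv⟩
  set S : ℕ → Set ℕ := fun n => range (Nat.pair n)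
  have hS : Pairwise (Disjoint on S) := fun m n hmn =>
    disjoint_range_iff.2 fun a b h => hmn (Nat.pair_eq_pair.1 h).1
  have hpick : ∀ n, ∃ z ∈ D n, S n ∈ z.1 := fun n =>
    (hD n).exists_mem_open (isOpen_setOf_mem _)
      (exists_mem_of_infinite (infinite_range_of_injective fun a b h => (Nat.pair_eq_pair.1 h).2))
  choose d hdD hdS using hpick
  obtain ⟨x, φ, hφ, hlim⟩ := hconv d hdD
  exact Ultrafilter.not_tendsto_of_pairwise_disjoint (hS.comp_of_injective hφ.injective)
    (fun k => hdS (φ k)) x.1 ((continuous_subtype_val.tendsto x).comp hlim)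

end omegaStar

/-- `ω*` is DRC but not DRS_ω; consequently DRC does not imply DRS_ω. -/
theorem omegaStar_isDRC_not_isDRSomega : IsDRC omegaStar ∧ ¬ IsDRSomega omegaStar :=
  ⟨isDRC_of_compactSpace omegaStar, omegaStar.not_isDRSomega⟩
end

section
/- Fix K, L, M, the partitions {K_n}, {L_n}, and the families 𝒦, ℒ, ℳ. Let β < ω₁ be a limit ordinal and let ⟨𝔸^α : α < β⟩ be a ⪯-increasing sequence of approximations, and let ⟨X^β, ℬ^β⟩ = lim ⟨desc(𝔸^α) : α < β⟩ with generated topology τ_β. Then: (1) for every α < β and every y ∈ γ^α, if F^α_y ∈ 𝒦 then F^α_y converges to y in τ_β, and if F^α_y ∈ ℒ ∪ ℳ then y ∈ acc_{τ_β}(F^α_y); (2) there exists a countable approximation 𝔸^β whose description is ⟨X^β, ℬ^β⟩ such that 𝔸^α ⪯ 𝔸^β for every α < β. -/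
/-- `U` is open in the topology on the set `Xc` generated by the base
`⟨B i : i < ν⟩`: `U ⊆ Xc` and every point of `U` lies in a basic set contained in `U`. -/
def IsOpenIn {α : Type*} (Xc : Set α) (ν : Ordinal) (B : Ordinal → Set α) (U : Set α) : Prop :=
  U ⊆ Xc ∧ ∀ x ∈ U, ∃ i < ν, x ∈ B i ∧ B i ⊆ U

/-- `⟨Xc, ⟨B i : i < ν⟩⟩` is a *description*: the ordinal-indexed family
`⟨B i : i < ν⟩` consists of subsets of `Xc` and forms a base of clopen sets for a
zero-dimensional Hausdorff topology on `Xc`. -/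
def IsDescription {α : Type*} (Xc : Set α) (ν : Ordinal) (B : Ordinal → Set α) : Prop :=
  (∀ i < ν, B i ⊆ Xc) ∧
  (⋃ i ∈ Set.Iio ν, B i) = Xc ∧
  (∀ i < ν, ∀ j < ν, ∀ x ∈ B i ∩ B j, ∃ k < ν, x ∈ B k ∧ B k ⊆ B i ∩ B j) ∧
  (∀ i < ν, IsOpenIn Xc ν B (Xc \ B i)) ∧
  (∀ x ∈ Xc, ∀ y ∈ Xc, x ≠ y →
    ∃ i < ν, ∃ j < ν, x ∈ B i ∧ y ∈ B j ∧ B i ∩ B j = ∅)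

/-- The partial order `⪯` on descriptions. -/
def DescLE {α : Type*} (X0 : Set α) (ν0 : Ordinal) (B0 : Ordinal → Set α)
    (X1 : Set α) (ν1 : Ordinal) (B1 : Ordinal → Set α) : Prop :=
  X0 ⊆ X1 ∧ ν0 ≤ ν1 ∧
  (∀ i < ν0, B1 i ∩ X0 = B0 i) ∧
  (∀ i < ν0, ∀ j < ν0, (B0 i ⊆ B0 j ↔ B1 i ⊆ B1 j)) ∧
  (∀ i < ν0, ∀ j < ν0, (B0 i ∩ B0 j = ∅ ↔ B1 i ∩ B1 j = ∅))

/-- The set `A` converges to the point `x` in the topology on `Xc` generated by the base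
`⟨B i : i < ν⟩`: every open set containing `x` contains all but finitely many
elements of `A`. -/
def ConvIn {α : Type*} (Xc : Set α) (ν : Ordinal) (B : Ordinal → Set α)
    (A : Set α) (x : α) : Prop :=
  ∀ U : Set α, IsOpenIn Xc ν B U → x ∈ U → (A \ U).Finite

/-- The set of accumulation points of `A` in the topology on `Xc` generated by the base
`⟨B i : i < ν⟩`: points of `Xc` each of whose open neighbourhoods meets `A` in an
infinite set. -/
def accIn {α : Type*} (Xc : Set α) (ν : Ordinal) (B : Ordinal → Set α)
    (A : Set α) : Set α :=
  {x | x ∈ Xc ∧ ∀ U : Set α, IsOpenIn Xc ν B U → x ∈ U → (A ∩ U).Infinite}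

/-- `A ∈ 𝒦`, i.e. `A ⊆ K` and `A ∩ K_n` is finite for every `n`. -/
def MemKK {α : Type*} (K : Set α) (Kp : ℕ → Set α) (A : Set α) : Prop :=
  A ⊆ K ∧ ∀ n : ℕ, (A ∩ Kp n).Finite

/-- `A ∈ ℒ`, i.e. `A ⊆ L` and `A ∩ L_n` is finite for every `n`. -/
def MemLL {α : Type*} (L : Set α) (Lp : ℕ → Set α) (A : Set α) : Prop :=
  A ⊆ L ∧ ∀ n : ℕ, (A ∩ Lp n).Finite

/-- The fixed data: `K, L, M` are pairwise disjoint countably infinite sets,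
`⟨Kp n⟩` and `⟨Lp n⟩` are partitions of `K` and `L` into infinitely many infinite
pieces, and `emb` is an injective enumeration of the "ordinal part" (representing the
countable ordinals), whose range is disjoint from `K ∪ L ∪ M`. -/
def SetupKLM {α : Type*} (K L M : Set α) (Kp Lp : ℕ → Set α) (emb : Ordinal → α) : Prop :=
  K.Countable ∧ K.Infinite ∧ L.Countable ∧ L.Infinite ∧ M.Countable ∧ M.Infinite ∧
  Disjoint K L ∧ Disjoint K M ∧ Disjoint L M ∧
  (⋃ n, Kp n) = K ∧ Pairwise (Function.onFun Disjoint Kp) ∧ (∀ n, (Kp n).Infinite) ∧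
  (⋃ n, Lp n) = L ∧ Pairwise (Function.onFun Disjoint Lp) ∧ (∀ n, (Lp n).Infinite) ∧
  (∀ a b : Ordinal, a < (Cardinal.aleph 1).ord → b < (Cardinal.aleph 1).ord →
    emb a = emb b → a = b) ∧
  (∀ a : Ordinal, a < (Cardinal.aleph 1).ord → emb a ∉ K ∪ L ∪ M)

/-- The underlying set `X = K ∪ L ∪ M ∪ γ` of an approximation
(the ordinal `γ` being represented by `emb '' (Set.Iio γ)`). -/
def carrierOf {α : Type*} (K L M : Set α) (emb : Ordinal → α) (γ : Ordinal) : Set α :=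
  K ∪ L ∪ M ∪ emb '' Set.Iio γ

/-- `⟨K ∪ L ∪ M ∪ γ, ⟨B i : i < ν⟩, ⟨F y : y < γ⟩⟩` is a *countable approximation*:
`γ, ν < ω₁`; the underlying set is countable and `⟨B i : i < ν⟩` is a description of it;
each `F y` (for `y < γ`) is an infinite member of `𝒦 ∪ ℒ ∪ ℳ` converging to (the point
representing) `y`; and every basic set `B i` meets `M` in an infinite set and meets
`Kp n` and `Lp n` in infinite sets for all but finitely many `n`. -/
def IsApprox {α : Type*} (K L M : Set α) (Kp Lp : ℕ → Set α) (emb : Ordinal → α)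
    (γ ν : Ordinal) (B : Ordinal → Set α) (F : Ordinal → Set α) : Prop :=
  γ < (Cardinal.aleph 1).ord ∧ ν < (Cardinal.aleph 1).ord ∧
  (carrierOf K L M emb γ).Countable ∧
  IsDescription (carrierOf K L M emb γ) ν B ∧
  (∀ y < γ, (F y).Infinite ∧ (MemKK K Kp (F y) ∨ MemLL L Lp (F y) ∨ F y ⊆ M) ∧
    ConvIn (carrierOf K L M emb γ) ν B (F y) (emb y)) ∧
  (∀ i < ν, (B i ∩ M).Infinite ∧
    ∃ N : ℕ, ∀ n ≥ N, (B i ∩ Kp n).Infinite ∧ (B i ∩ Lp n).Infinite)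

/-- The partial order `⪯` on approximations: the descriptions extend each other,
`F¹_y = F⁰_y` whenever `F⁰_y ∈ 𝒦`, and `F¹_y ⊆* F⁰_y` whenever `F⁰_y ∈ ℒ ∪ ℳ`. -/
def ApproxLE {α : Type*} (K L M : Set α) (Kp Lp : ℕ → Set α) (emb : Ordinal → α)
    (γ0 ν0 : Ordinal) (B0 F0 : Ordinal → Set α)
    (γ1 ν1 : Ordinal) (B1 F1 : Ordinal → Set α) : Prop :=
  γ0 ≤ γ1 ∧
  DescLE (carrierOf K L M emb γ0) ν0 B0 (carrierOf K L M emb γ1) ν1 B1 ∧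
  ∀ y < γ0, (MemKK K Kp (F0 y) → F1 y = F0 y) ∧
    ((MemLL L Lp (F0 y) ∨ F0 y ⊆ M) → (F1 y \ F0 y).Finite)

/-!
The limit description is a description extending every stage because the stages are
`⪯`-increasing: membership in a limit basic set, inclusions and disjointness between basic sets
are all decided at a single stage and never change afterwards.

If `F^a_y ∈ 𝒦` it never changes either, so it converges at every later stage and hence in the
limit; if `F^a_y ∈ ℒ ∪ ℳ`, every later `F^c_y` is infinite, converges at stage `c` and is almost
contained in `F^a_y`, which makes `y` an accumulation point of `F^a_y`. For the new sequence
keep `F_y` in the first case; in the second, along a cofinal `ω`-sequence `b n` of stages and an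
enumeration `V n` of the (countably many) basic neighbourhoods of `y`, the sets `F^{b n}_y ∩ V n`
have infinite finite intersections, and any infinite pseudo-intersection of them works.
-/

open Set

universe u v w

theorem exists_infinite_subset_forall_diff_finite {α : Type*} {S : ℕ → Set α}
    (hS : ∀ n, (⋂ m ≤ n, S m).Infinite) :
    ∃ G ⊆ S 0, G.Infinite ∧ ∀ n, (G \ S n).Finite := by
  classical
  choose pick hpick hfresh using fun n (s : Finset α) => (hS n).exists_notMem_finset s
  -- `P n` holds the first `n` points, and the next point is picked outside of it
  let P : ℕ → Finset α := fun n => Nat.rec ∅ (fun k s => insert (pick k s) s) n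
  let x : ℕ → α := fun n => pick n (P n)
  have hP : ∀ n, P n = (Finset.range n).image x := by
    intro n
    induction n with
    | zero => rfl
    | succ n ih => rw [Finset.range_add_one, Finset.image_insert, ← ih]
  have hxS : ∀ {m n}, m ≤ n → x n ∈ S m := fun hmn => mem_iInter₂.1 (hpick _ _) _ hmn
  have hnew : ∀ n, x n ∉ (Finset.range n).image x := fun n => by
    rw [← hP]
    exact hfresh n (P n)
  have hinj : x.Injective := by
    refine fun m n hmn => le_antisymm ?_ ?_ <;> refine le_of_not_gt fun hlt => ?_
    · exact hnew m (Finset.mem_image.2 ⟨n, Finset.mem_range.2 hlt, hmn.symm⟩)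
    · exact hnew n (Finset.mem_image.2 ⟨m, Finset.mem_range.2 hlt, hmn⟩)
  refine ⟨range x, range_subset_iff.2 fun n => hxS n.zero_le, infinite_range_of_injective hinj,
    fun n => ((finite_Iio n).image x).subset ?_⟩
  rintro _ ⟨⟨k, rfl⟩, hk⟩
  exact ⟨k, lt_of_not_ge fun h => hk (hxS h), rfl⟩

theorem countable_Iio_of_lt_omega_one {o : Ordinal.{u}} (ho : o < (Cardinal.aleph 1).ord) :
    (Iio o).Countable := by
  rw [← Cardinal.le_aleph0_iff_set_countable, Cardinal.mk_Iio_ordinal, Cardinal.lift_le_aleph0,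
    ← Cardinal.lt_aleph_one_iff]
  exact Cardinal.lt_ord.1 ho

theorem sSup_image_Iio_lt_omega_one {β : Ordinal.{u}} (hβ : β < (Cardinal.aleph 1).ord)
    {g : Ordinal.{u} → Ordinal.{v}} (hg : ∀ a < β, g a < (Cardinal.aleph 1).ord) :
    sSup (g '' Iio β) < (Cardinal.aleph 1).ord := by
  have := (countable_Iio_of_lt_omega_one hβ).to_subtype
  rw [image_eq_range, Cardinal.ord_aleph]
  exact Ordinal.iSup_lt_omega_one fun a => Cardinal.ord_aleph 1 ▸ hg a a.2

section Description

variable {α : Type*} {Xc : Set α} {ν : Ordinal} {B : Ordinal → Set α}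

theorem isOpenIn_base {i : Ordinal} (hi : i < ν) (hB : B i ⊆ Xc) : IsOpenIn Xc ν B (B i) :=
  ⟨hB, fun _ hx => ⟨i, hi, hx, subset_rfl⟩⟩

theorem ConvIn.infinite_inter {A U : Set α} {x : α} (hconv : ConvIn Xc ν B A x)
    (hA : A.Infinite) (hU : IsOpenIn Xc ν B U) (hxU : x ∈ U) : (A ∩ U).Infinite := by
  simpa only [sdiff_sdiff_right_self] using hA.sdiff (hconv U hU hxU)

theorem IsDescription.exists_base_subset_biInter (hD : IsDescription Xc ν B)
    {h : ℕ → Ordinal} (hh : ∀ m, h m < ν) {x : α} :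
    ∀ {n}, x ∈ ⋂ m ≤ n, B (h m) → ∃ k < ν, x ∈ B k ∧ B k ⊆ ⋂ m ≤ n, B (h m)
  | 0, hx => by
    simp only [Nat.le_zero, iInter_iInter_eq_left] at hx ⊢
    exact ⟨h 0, hh 0, hx, subset_rfl⟩
  | n + 1, hx => by
    rw [biInter_le_succ] at hx ⊢
    obtain ⟨k, hk, hxk, hsub⟩ := exists_base_subset_biInter hD hh hx.1
    obtain ⟨k', hk', hxk', hsub'⟩ := hD.2.2.1 k hk _ (hh (n + 1)) x ⟨hxk, hx.2⟩
    exact ⟨k', hk', hxk', hsub'.trans (inter_subset_inter_left _ hsub)⟩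

theorem IsDescription.exists_range_eq (hD : IsDescription Xc ν B)
    (hν : ν < (Cardinal.aleph 1).ord) {x : α} (hx : x ∈ Xc) :
    ∃ h : ℕ → Ordinal, {i | i < ν ∧ x ∈ B i} = range h := by
  rw [← hD.2.1] at hx
  obtain ⟨i, hi, hxi⟩ := mem_iUnion₂.1 hx
  exact ((countable_Iio_of_lt_omega_one hν).mono fun i hi => hi.1).exists_eq_range ⟨i, hi, hxi⟩

theorem DescLE.base_subset {X0 X1 : Set α} {ν0 ν1 : Ordinal} {B0 B1 : Ordinal → Set α}
    (h : DescLE X0 ν0 B0 X1 ν1 B1) {i : Ordinal} (hi : i < ν0) : B0 i ⊆ B1 i :=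
  h.2.2.1 i hi ▸ inter_subset_left

end Description

section Limit

variable {α : Type*} {β : Ordinal.{v}} {Xf : Ordinal.{v} → Set α}
  {νf : Ordinal.{v} → Ordinal.{w}} {Bf : Ordinal.{v} → Ordinal.{w} → Set α}

def limCarrier (β : Ordinal.{v}) (Xf : Ordinal.{v} → Set α) : Set α :=
  ⋃ a ∈ Iio β, Xf a

noncomputable def limIndex (β : Ordinal.{v}) (νf : Ordinal.{v} → Ordinal.{w}) : Ordinal.{w} :=
  sSup (νf '' Iio β)

def limBase (β : Ordinal.{v}) (νf : Ordinal.{v} → Ordinal.{w})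
    (Bf : Ordinal.{v} → Ordinal.{w} → Set α) (i : Ordinal.{w}) : Set α :=
  ⋃ a ∈ {a : Ordinal | a < β ∧ i < νf a}, Bf a i

theorem mem_limCarrier {x : α} : x ∈ limCarrier β Xf ↔ ∃ a < β, x ∈ Xf a := by
  simp [limCarrier]

theorem mem_limBase {x : α} {i : Ordinal} :
    x ∈ limBase β νf Bf i ↔ ∃ a < β, i < νf a ∧ x ∈ Bf a i := by
  simp [limBase, and_assoc]

theorem subset_limBase {a i : Ordinal} (ha : a < β) (hi : i < νf a) :
    Bf a i ⊆ limBase β νf Bf i :=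
  fun _ hx => mem_limBase.2 ⟨a, ha, hi, hx⟩

theorem exists_lt_of_lt_limIndex {i : Ordinal} (hi : i < limIndex β νf) : ∃ a < β, i < νf a := by
  obtain ⟨_, ⟨a, ha, rfl⟩, hia⟩ := exists_lt_of_lt_csSup' hi
  exact ⟨a, ha, hia⟩

theorem le_limIndex (hbdd : BddAbove (νf '' Iio β)) {a : Ordinal} (ha : a < β) :
    νf a ≤ limIndex β νf :=
  le_csSup hbdd (mem_image_of_mem _ ha)

variable (hle : ∀ a1 a2, a1 ≤ a2 → a2 < β →
  DescLE (Xf a1) (νf a1) (Bf a1) (Xf a2) (νf a2) (Bf a2))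
include hle

theorem base_subset_carrier {a i : Ordinal} (ha : a < β) (hi : i < νf a) : Bf a i ⊆ Xf a :=
  (hle a a le_rfl ha).2.2.1 i hi ▸ inter_subset_right

theorem exists_stage_mem_limCarrier {x : α} (hx : x ∈ limCarrier β Xf) {a : Ordinal}
    (ha : a < β) : ∃ c < β, a ≤ c ∧ x ∈ Xf c := by
  obtain ⟨a', ha', hx⟩ := mem_limCarrier.1 hx
  exact ⟨max a a', max_lt ha ha', le_max_left _ _,
    (hle a' _ (le_max_right _ _) (max_lt ha ha')).1 hx⟩

theorem exists_stage_mem_limBase {x : α} {i : Ordinal} (hx : x ∈ limBase β νf Bf i)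
    {a : Ordinal} (ha : a < β) : ∃ c < β, a ≤ c ∧ i < νf c ∧ x ∈ Bf c i := by
  obtain ⟨a', ha', hi, hx⟩ := mem_limBase.1 hx
  have hle' := hle a' _ (le_max_right a a') (max_lt ha ha')
  exact ⟨max a a', max_lt ha ha', le_max_left _ _, hi.trans_le hle'.2.1, hle'.base_subset hi hx⟩

theorem exists_stage_mem_limBase_inter {x : α} {i j : Ordinal} (hxi : x ∈ limBase β νf Bf i)
    (hxj : x ∈ limBase β νf Bf j) {a : Ordinal} (ha : a < β) :
    ∃ c < β, a ≤ c ∧ i < νf c ∧ j < νf c ∧ x ∈ Bf c i ∧ x ∈ Bf c j := by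
  obtain ⟨c, hc, hac, hic, hxic⟩ := exists_stage_mem_limBase hle hxi ha
  obtain ⟨d, hd, hcd, hjd, hxjd⟩ := exists_stage_mem_limBase hle hxj hc
  have hle' := hle c d hcd hd
  exact ⟨d, hd, hac.trans hcd, hic.trans_le hle'.2.1, hjd, hle'.base_subset hic hxic, hxjd⟩

theorem limBase_inter_eq {a i : Ordinal} (ha : a < β) (hi : i < νf a) :
    limBase β νf Bf i ∩ Xf a = Bf a i := by
  refine subset_antisymm (fun x ⟨hxi, hxa⟩ => ?_)
    (subset_inter (subset_limBase ha hi) (base_subset_carrier hle ha hi))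
  obtain ⟨c, hc, hac, -, hxc⟩ := exists_stage_mem_limBase hle hxi ha
  exact (hle a c hac hc).2.2.1 i hi ▸ ⟨hxc, hxa⟩

theorem limBase_subset_limBase {a i j : Ordinal} (ha : a < β) (hi : i < νf a) (hj : j < νf a)
    (hij : Bf a i ⊆ Bf a j) : limBase β νf Bf i ⊆ limBase β νf Bf j := fun x hx => by
  obtain ⟨c, hc, hac, -, hxc⟩ := exists_stage_mem_limBase hle hx ha
  have hle' := hle a c hac hc
  exact subset_limBase hc (hj.trans_le hle'.2.1) (((hle'.2.2.2.1 i hi j hj).1 hij) hxc)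

theorem limBase_inter_limBase_eq_empty {a i j : Ordinal} (ha : a < β) (hi : i < νf a)
    (hj : j < νf a) (hij : Bf a i ∩ Bf a j = ∅) :
    limBase β νf Bf i ∩ limBase β νf Bf j = ∅ := by
  refine eq_empty_iff_forall_notMem.2 fun x ⟨hxi, hxj⟩ => ?_
  obtain ⟨c, hc, hac, -, -, hxic, hxjc⟩ := exists_stage_mem_limBase_inter hle hxi hxj ha
  exact ((hle a c hac hc).2.2.2.2 i hi j hj).1 hij |>.subset ⟨hxic, hxjc⟩

theorem descLE_limCarrier (hbdd : BddAbove (νf '' Iio β)) {a : Ordinal} (ha : a < β) :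
    DescLE (Xf a) (νf a) (Bf a) (limCarrier β Xf) (limIndex β νf) (limBase β νf Bf) := by
  refine ⟨fun x hx => mem_limCarrier.2 ⟨a, ha, hx⟩, le_limIndex hbdd ha,
    fun i hi => limBase_inter_eq hle ha hi, fun i hi j hj => ⟨limBase_subset_limBase hle ha hi hj,
      fun h => ?_⟩, fun i hi j hj => ⟨limBase_inter_limBase_eq_empty hle ha hi hj, fun h => ?_⟩⟩
  · rw [← limBase_inter_eq hle ha hi, ← limBase_inter_eq hle ha hj]
    exact inter_subset_inter_left _ h
  · rw [← limBase_inter_eq hle ha hi, ← limBase_inter_eq hle ha hj, ← subset_empty_iff, ← h]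
    exact inter_subset_inter inter_subset_left inter_subset_left

theorem isOpenIn_limCarrier_diff_limBase (hdesc : ∀ a < β, IsDescription (Xf a) (νf a) (Bf a))
    (hbdd : BddAbove (νf '' Iio β)) {i : Ordinal} (hi : i < limIndex β νf) :
    IsOpenIn (limCarrier β Xf) (limIndex β νf) (limBase β νf Bf)
      (limCarrier β Xf \ limBase β νf Bf i) := by
  refine ⟨sdiff_subset, fun x ⟨hx, hxi⟩ => ?_⟩
  obtain ⟨a, ha, hia⟩ := exists_lt_of_lt_limIndex hi
  obtain ⟨c, hc, hac, hxc⟩ := exists_stage_mem_limCarrier hle hx ha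
  have hic := hia.trans_le (hle a c hac hc).2.1
  obtain ⟨k, hk, hxk, hsub⟩ :=
    ((hdesc c hc).2.2.2.1 i hic).2 x ⟨hxc, fun h => hxi (subset_limBase hc hic h)⟩
  have hdisj := limBase_inter_limBase_eq_empty hle hc hk hic
    (eq_empty_iff_forall_notMem.2 fun z hz => (hsub hz.1).2 hz.2)
  refine ⟨k, (le_limIndex hbdd hc).trans_lt' hk, subset_limBase hc hk hxk,
    fun z hz => ⟨?_, fun hzi => hdisj.subset ⟨hz, hzi⟩⟩⟩
  obtain ⟨a', ha', hka', hz⟩ := mem_limBase.1 hz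
  exact mem_limCarrier.2 ⟨a', ha', base_subset_carrier hle ha' hka' hz⟩

theorem isDescription_limCarrier (hdesc : ∀ a < β, IsDescription (Xf a) (νf a) (Bf a))
    (hbdd : BddAbove (νf '' Iio β)) :
    IsDescription (limCarrier β Xf) (limIndex β νf) (limBase β νf Bf) := by
  have hlift {a i} (ha : a < β) (hi : i < νf a) : i < limIndex β νf :=
    hi.trans_le (le_limIndex hbdd ha)
  have hcarrier {i} : limBase β νf Bf i ⊆ limCarrier β Xf := fun x hx => by
    obtain ⟨a, ha, hi, hx⟩ := mem_limBase.1 hx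
    exact mem_limCarrier.2 ⟨a, ha, base_subset_carrier hle ha hi hx⟩
  refine ⟨fun _ _ => hcarrier, subset_antisymm (iUnion₂_subset fun _ _ => hcarrier) fun x hx => ?_,
    fun i hi j hj x ⟨hxi, hxj⟩ => ?_,
    fun i hi => isOpenIn_limCarrier_diff_limBase hle hdesc hbdd hi,
    fun x hx y hy hxy => ?_⟩
  · obtain ⟨a, ha, hx⟩ := mem_limCarrier.1 hx
    rw [← (hdesc a ha).2.1] at hx
    obtain ⟨i, hi, hxi⟩ := mem_iUnion₂.1 hx
    exact mem_iUnion₂.2 ⟨i, hlift ha hi, subset_limBase ha hi hxi⟩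
  · obtain ⟨a, ha, -, -⟩ := mem_limBase.1 hxi
    obtain ⟨c, hc, -, hic, hjc, hxic, hxjc⟩ := exists_stage_mem_limBase_inter hle hxi hxj ha
    obtain ⟨k, hk, hxk, hsub⟩ := (hdesc c hc).2.2.1 i hic j hjc x ⟨hxic, hxjc⟩
    exact ⟨k, hlift hc hk, subset_limBase hc hk hxk, subset_inter
      (limBase_subset_limBase hle hc hk hic (hsub.trans inter_subset_left))
      (limBase_subset_limBase hle hc hk hjc (hsub.trans inter_subset_right))⟩
  · obtain ⟨a, ha, hxa⟩ := mem_limCarrier.1 hx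
    obtain ⟨c, hc, hac, hyc⟩ := exists_stage_mem_limCarrier hle hy ha
    obtain ⟨i, hi, j, hj, hxi, hyj, hij⟩ :=
      (hdesc c hc).2.2.2.2 x ((hle a c hac hc).1 hxa) y hyc hxy
    exact ⟨i, hlift hc hi, j, hlift hc hj, subset_limBase hc hi hxi, subset_limBase hc hj hyj,
      limBase_inter_limBase_eq_empty hle hc hi hj hij⟩

theorem exists_stage_base_subset {U : Set α}
    (hU : IsOpenIn (limCarrier β Xf) (limIndex β νf) (limBase β νf Bf) U) {x : α} (hxU : x ∈ U)
    {a : Ordinal} (ha : a < β) : ∃ c < β, a ≤ c ∧ ∃ i < νf c, x ∈ Bf c i ∧ Bf c i ⊆ U := by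
  obtain ⟨i, -, hxi, hiU⟩ := hU.2 x hxU
  obtain ⟨c, hc, hac, hic, hxc⟩ := exists_stage_mem_limBase hle hxi ha
  exact ⟨c, hc, hac, i, hic, hxc, (subset_limBase hc hic).trans hiU⟩

theorem convIn_limCarrier {A : Set α} {x : α} {a : Ordinal} (ha : a < β)
    (hconv : ∀ c < β, a ≤ c → ConvIn (Xf c) (νf c) (Bf c) A x) :
    ConvIn (limCarrier β Xf) (limIndex β νf) (limBase β νf Bf) A x := fun U hU hxU => by
  obtain ⟨c, hc, hac, i, hi, hxi, hiU⟩ := exists_stage_base_subset hle hU hxU ha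
  exact (hconv c hc hac _ (isOpenIn_base hi (base_subset_carrier hle hc hi)) hxi).subset
    (sdiff_subset_sdiff_right hiU)

theorem mem_accIn_limCarrier {A : Set α} {x : α} (hx : x ∈ limCarrier β Xf) {a : Ordinal}
    (ha : a < β)
    (hacc : ∀ c < β, a ≤ c → ∃ A' : Set α, A'.Infinite ∧ (A' \ A).Finite ∧
      ConvIn (Xf c) (νf c) (Bf c) A' x) :
    x ∈ accIn (limCarrier β Xf) (limIndex β νf) (limBase β νf Bf) A := by
  refine ⟨hx, fun U hU hxU => ?_⟩
  obtain ⟨c, hc, hac, i, hi, hxi, hiU⟩ := exists_stage_base_subset hle hU hxU ha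
  obtain ⟨A', hA', hA'A, hconv⟩ := hacc c hc hac
  refine ((hconv.infinite_inter hA' (isOpenIn_base hi (base_subset_carrier hle hc hi)) hxi).sdiff
    hA'A).mono ?_
  rintro z ⟨⟨hzA', hzi⟩, hzA⟩
  exact ⟨by_contra fun h => hzA ⟨hzA', h⟩, hiU hzi⟩

end Limit

theorem exists_monotone_cofinal_seq {β a : Ordinal.{v}} (ha : a < β)
    (hβ : β < (Cardinal.aleph 1).ord) :
    ∃ b : ℕ → Ordinal, Monotone b ∧ (∀ n, a ≤ b n ∧ b n < β) ∧ ∀ a' < β, ∃ n, a' ≤ b n := by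
  have := (countable_Iio_of_lt_omega_one hβ).to_subtype
  have : Nonempty (Iio β) := ⟨⟨a, ha⟩⟩
  obtain ⟨xs, hxs, htend⟩ := Filter.exists_seq_monotone_tendsto_atTop_atTop (Iio β)
  refine ⟨fun n => max a (xs n), fun m n hmn => max_le_max le_rfl (hxs hmn),
    fun n => ⟨le_max_left _ _, max_lt ha (xs n).2⟩, fun a' ha' => ?_⟩
  obtain ⟨n, hn⟩ := (Filter.tendsto_atTop.1 htend ⟨a', ha'⟩).exists
  exact ⟨n, (Subtype.coe_le_coe.2 hn).trans (le_max_right _ _)⟩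

theorem MemLL.mono {α : Type*} {L : Set α} {Lp : ℕ → Set α} {A B : Set α}
    (hA : MemLL L Lp A) (hBA : B ⊆ A) : MemLL L Lp B :=
  ⟨hBA.trans hA.1, fun n => (hA.2 n).subset (inter_subset_inter_left _ hBA)⟩

theorem infinite_sdiff_of_subset_of_memLL_or_subset {α : Type*} {K L M : Set α}
    {Lp : ℕ → Set α} (hKL : Disjoint K L) (hKM : Disjoint K M) {A B : Set α} (hA : A.Infinite)
    (hAK : A ⊆ K) (hB : MemLL L Lp B ∨ B ⊆ M) : (A \ B).Infinite := by
  have hBLM : B ⊆ L ∪ M := hB.elim (fun h => h.1.trans subset_union_left)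
    (·.trans subset_union_right)
  rwa [((disjoint_union_right.2 ⟨hKL, hKM⟩).mono hAK hBLM).sdiff_eq_left]

theorem not_memLM_of_memKK {α : Type*} {K L M : Set α} {Kp Lp : ℕ → Set α}
    (hKL : Disjoint K L) (hKM : Disjoint K M) {A : Set α} (hA : A.Infinite)
    (hK : MemKK K Kp A) : ¬(MemLL L Lp A ∨ A ⊆ M) := fun hLM => by
  simpa using infinite_sdiff_of_subset_of_memLL_or_subset hKL hKM hA hK.1 hLM

theorem carrierOf_limIndex {α : Type*} {K L M : Set α} {emb : Ordinal.{u} → α}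
    {β : Ordinal.{v}} (hβ0 : 0 < β) {γf : Ordinal.{v} → Ordinal.{u}}
    (hbdd : BddAbove (γf '' Iio β)) :
    carrierOf K L M emb (limIndex β γf) = limCarrier β fun a => carrierOf K L M emb (γf a) := by
  ext x
  simp only [mem_limCarrier, carrierOf, mem_union, mem_image, mem_Iio]
  constructor
  · rintro (hx | ⟨y, hy, rfl⟩)
    · exact ⟨0, hβ0, Or.inl hx⟩
    · obtain ⟨a, ha, hya⟩ := exists_lt_of_lt_limIndex hy
      exact ⟨a, ha, Or.inr ⟨y, hya, rfl⟩⟩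
  · rintro ⟨a, ha, hx | ⟨y, hy, rfl⟩⟩
    · exact Or.inl hx
    · exact Or.inr ⟨y, hy.trans_le (le_limIndex hbdd ha), rfl⟩

section Approx

variable {α : Type*} {K L M : Set α} {Kp Lp : ℕ → Set α} {emb : Ordinal.{u} → α}
  {β : Ordinal.{v}} {γf : Ordinal.{v} → Ordinal.{u}} {νf : Ordinal.{v} → Ordinal.{w}}
  {Bf : Ordinal.{v} → Ordinal.{w} → Set α} {Ff : Ordinal.{v} → Ordinal.{u} → Set α}
  (happrox : ∀ a < β, IsApprox K L M Kp Lp emb (γf a) (νf a) (Bf a) (Ff a))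
  (hmono : ∀ a1 a2 : Ordinal, a1 ≤ a2 → a2 < β →
    ApproxLE K L M Kp Lp emb (γf a1) (νf a1) (Bf a1) (Ff a1) (γf a2) (νf a2) (Bf a2) (Ff a2))

local notation "Xβ" => limCarrier β fun a => carrierOf K L M emb (γf a)
local notation "νβ" => limIndex β νf
local notation "Bβ" => limBase β νf Bf

include hmono in
theorem descLE_of_approxLE : ∀ a1 a2 : Ordinal, a1 ≤ a2 → a2 < β →
    DescLE (carrierOf K L M emb (γf a1)) (νf a1) (Bf a1) (carrierOf K L M emb (γf a2)) (νf a2)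
      (Bf a2) :=
  fun a1 a2 h h2 => (hmono a1 a2 h h2).2.1

include happrox in
theorem bddAbove_image_index : BddAbove (νf '' Iio β) :=
  ⟨_, forall_mem_image.2 fun a ha => (happrox a ha).2.1.le⟩

include happrox in
theorem limIndex_lt_omega_one (hβ : β < (Cardinal.aleph 1).ord) :
    νβ < (Cardinal.aleph 1).ord :=
  sSup_image_Iio_lt_omega_one hβ fun a ha => (happrox a ha).2.1

include happrox hmono in
theorem isDescription_limCarrier_of_approx : IsDescription Xβ νβ Bβ :=
  isDescription_limCarrier (descLE_of_approxLE hmono) (fun a ha => (happrox a ha).2.2.2.1)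
    (bddAbove_image_index happrox)

include happrox hmono in
theorem convIn_limCarrier_of_memKK {a y : Ordinal} (ha : a < β) (hy : y < γf a)
    (hK : MemKK K Kp (Ff a y)) : ConvIn Xβ νβ Bβ (Ff a y) (emb y) :=
  convIn_limCarrier (descLE_of_approxLE hmono) ha fun c hc hac => by
    rw [← ((hmono a c hac hc).2.2 y hy).1 hK]
    exact ((happrox c hc).2.2.2.2.1 y (hy.trans_le (hmono a c hac hc).1)).2.2

include happrox hmono in
theorem mem_accIn_limCarrier_of_memLM {a y : Ordinal} (ha : a < β) (hy : y < γf a)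
    (hLM : MemLL L Lp (Ff a y) ∨ Ff a y ⊆ M) : emb y ∈ accIn Xβ νβ Bβ (Ff a y) := by
  refine mem_accIn_limCarrier (descLE_of_approxLE hmono)
    (mem_limCarrier.2 ⟨a, ha, Or.inr ⟨y, hy, rfl⟩⟩) ha fun c hc hac => ?_
  have hFc := (happrox c hc).2.2.2.2.1 y (hy.trans_le (hmono a c hac hc).1)
  exact ⟨Ff c y, hFc.1, ((hmono a c hac hc).2.2 y hy).2 hLM, hFc.2.2⟩

section Disjoint

variable (hKL : Disjoint K L) (hKM : Disjoint K M)
include happrox hmono hKL hKM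

theorem F_eq_of_memKK {a a' y : Ordinal} (ha : a < β) (ha' : a' < β) (hy : y < γf a)
    (hy' : y < γf a') (hK : MemKK K Kp (Ff a y)) : Ff a' y = Ff a y := by
  have hc : Ff (max a a') y = Ff a y :=
    ((hmono a _ (le_max_left _ _) (max_lt ha ha')).2.2 y hy).1 hK
  rcases (happrox a' ha').2.2.2.2.1 y hy' |>.2.1 with hK' | hLM'
  · rw [← hc, ((hmono a' _ (le_max_right _ _) (max_lt ha ha')).2.2 y hy').1 hK']
  · refine absurd (((hmono a' _ (le_max_right _ _) (max_lt ha ha')).2.2 y hy').2 hLM') ?_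
    rw [hc]
    exact infinite_sdiff_of_subset_of_memLL_or_subset hKL hKM
      ((happrox a ha).2.2.2.2.1 y hy).1 hK.1 hLM'

theorem F_memLM_of_memLM {a a' y : Ordinal} (ha : a < β) (ha' : a' < β) (hy : y < γf a)
    (hy' : y < γf a') (hLM : MemLL L Lp (Ff a y) ∨ Ff a y ⊆ M) :
    MemLL L Lp (Ff a' y) ∨ Ff a' y ⊆ M := by
  refine ((happrox a' ha').2.2.2.2.1 y hy').2.1.resolve_left fun hK' => ?_
  rw [F_eq_of_memKK happrox hmono hKL hKM ha' ha hy' hy hK'] at hLM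
  exact not_memLM_of_memKK hKL hKM ((happrox a' ha').2.2.2.2.1 y hy').1 hK' hLM

theorem exists_limit_F_of_memLM (hβ : β < (Cardinal.aleph 1).ord) {a y : Ordinal} (ha : a < β)
    (hy : y < γf a) (hLM : MemLL L Lp (Ff a y) ∨ Ff a y ⊆ M) :
    ∃ G : Set α, G.Infinite ∧ (MemLL L Lp G ∨ G ⊆ M) ∧ ConvIn Xβ νβ Bβ G (emb y) ∧
      ∀ a' < β, y < γf a' → (G \ Ff a' y).Finite := by
  obtain ⟨b, hbmono, hb, hbcof⟩ := exists_monotone_cofinal_seq ha hβ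
  have hyb n : y < γf (b n) := hy.trans_le (hmono a (b n) (hb n).1 (hb n).2).1
  have hLMb n := F_memLM_of_memLM happrox hmono hKL hKM ha (hb n).2 hy (hyb n) hLM
  have hD := isDescription_limCarrier_of_approx happrox hmono
  obtain ⟨h, hh⟩ := hD.exists_range_eq (limIndex_lt_omega_one happrox hβ)
    (mem_limCarrier.2 ⟨a, ha, Or.inr ⟨y, hy, rfl⟩⟩)
  have hhN n : h n < νβ ∧ emb y ∈ Bβ (h n) := hh.symm.subset (mem_range_self n)
  have hS n : (⋂ m ≤ n, Ff (b m) y ∩ Bβ (h m)).Infinite := by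
    obtain ⟨k, hk, hyk, hksub⟩ := hD.exists_base_subset_biInter (fun m => (hhN m).1)
      (mem_iInter₂.2 fun m _ => (hhN m).2)
    have hinf := (mem_accIn_limCarrier_of_memLM happrox hmono (hb n).2 (hyb n) (hLMb n)).2 _
      (isOpenIn_base hk (hD.1 k hk)) hyk
    have hfin : (⋃ m ≤ n, Ff (b n) y \ Ff (b m) y).Finite := (finite_le_nat n).biUnion
      fun m hm => ((hmono (b m) (b n) (hbmono hm) (hb n).2).2.2 y (hyb m)).2 (hLMb m)
    refine (hinf.sdiff hfin).mono ?_
    rintro z ⟨⟨hzF, hzk⟩, hz⟩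
    exact mem_iInter₂.2 fun m hm => ⟨by_contra fun h => hz (mem_iUnion₂.2 ⟨m, hm, hzF, h⟩),
      mem_iInter₂.1 (hksub hzk) m hm⟩
  obtain ⟨G, hG0, hGinf, hGS⟩ := exists_infinite_subset_forall_diff_finite hS
  have hGF : G ⊆ Ff (b 0) y := hG0.trans inter_subset_left
  refine ⟨G, hGinf, (hLMb 0).imp (·.mono hGF) hGF.trans, fun U hU hyU => ?_, fun a' ha' hy' => ?_⟩
  · obtain ⟨i, hi, hyi, hiU⟩ := hU.2 _ hyU
    obtain ⟨k, rfl⟩ : i ∈ range h := hh.subset ⟨hi, hyi⟩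
    exact (hGS k).subset (sdiff_subset_sdiff_right (inter_subset_right.trans hiU))
  · obtain ⟨n, hn⟩ := hbcof a' ha'
    refine ((hGS n).union (((hmono a' (b n) hn (hb n).2).2.2 y hy').2
      (F_memLM_of_memLM happrox hmono hKL hKM ha ha' hy hy' hLM))).subset ?_
    rintro z ⟨hzG, hz⟩
    by_cases hzS : z ∈ Ff (b n) y ∩ Bβ (h n)
    · exact Or.inr ⟨hzS.1, hz⟩
    · exact Or.inl ⟨hzG, hzS⟩

theorem exists_limit_F (hβ : β < (Cardinal.aleph 1).ord) {y : Ordinal}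
    (hy : y < limIndex β γf) :
    ∃ G : Set α, (G.Infinite ∧ (MemKK K Kp G ∨ MemLL L Lp G ∨ G ⊆ M) ∧
      ConvIn Xβ νβ Bβ G (emb y)) ∧ ∀ a' < β, y < γf a' →
        (MemKK K Kp (Ff a' y) → G = Ff a' y) ∧
        ((MemLL L Lp (Ff a' y) ∨ Ff a' y ⊆ M) → (G \ Ff a' y).Finite) := by
  obtain ⟨a, ha, hya⟩ := exists_lt_of_lt_limIndex hy
  have hFa := (happrox a ha).2.2.2.2.1 y hya
  rcases hFa.2.1 with hK | hLM
  · refine ⟨Ff a y, ⟨hFa.1, Or.inl hK, convIn_limCarrier_of_memKK happrox hmono ha hya hK⟩,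
      fun a' ha' hy' => ?_⟩
    have hF := F_eq_of_memKK happrox hmono hKL hKM ha ha' hya hy' hK
    refine ⟨fun _ => hF.symm, fun hLM' => absurd hLM' ?_⟩
    exact hF ▸ not_memLM_of_memKK hKL hKM hFa.1 hK
  · obtain ⟨G, hGinf, hGLM, hGconv, hGsub⟩ :=
      exists_limit_F_of_memLM happrox hmono hKL hKM hβ ha hya hLM
    refine ⟨G, ⟨hGinf, Or.inr hGLM, hGconv⟩, fun a' ha' hy' => ⟨fun hK' => absurd
      (F_memLM_of_memLM happrox hmono hKL hKM ha ha' hya hy' hLM)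
      (not_memLM_of_memKK hKL hKM ((happrox a' ha').2.2.2.2.1 y hy').1 hK'),
      fun _ => hGsub a' ha' hy'⟩⟩

end Disjoint

include happrox in
theorem infinite_limBase_inter {i : Ordinal} (hi : i < νβ) : (Bβ i ∩ M).Infinite ∧
    ∃ N : ℕ, ∀ n ≥ N, (Bβ i ∩ Kp n).Infinite ∧ (Bβ i ∩ Lp n).Infinite := by
  obtain ⟨a, ha, hia⟩ := exists_lt_of_lt_limIndex hi
  obtain ⟨hM, N, hN⟩ := (happrox a ha).2.2.2.2.2 i hia
  have hsub {S : Set α} : Bf a i ∩ S ⊆ Bβ i ∩ S := inter_subset_inter_left _ (subset_limBase ha hia)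
  exact ⟨hM.mono hsub, N, fun n hn => ⟨(hN n hn).1.mono hsub, (hN n hn).2.mono hsub⟩⟩

end Approx

/-- Limits of increasing sequences of approximations (Lemma `lm:approx`).
Let `β < ω₁` be a limit ordinal and let `⟨𝔸^a : a < β⟩` be a `⪯`-increasing sequence of
approximations; let `⟨X^β, ℬ^β⟩ = lim ⟨desc 𝔸^a : a < β⟩`.  Then:
(1) for every `a < β` and `y < γ^a`, if `F^a_y ∈ 𝒦` then `F^a_y` converges to `y` in the
limit topology, and if `F^a_y ∈ ℒ ∪ ℳ` then `y` is an accumulation point of `F^a_y`;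
(2) there is a countable approximation `𝔸^β` with description `⟨X^β, ℬ^β⟩` such that
`𝔸^a ⪯ 𝔸^β` for every `a < β`. -/
theorem lim_approx {α : Type*} (K L M : Set α) (Kp Lp : ℕ → Set α) (emb : Ordinal → α)
    (hsetup : SetupKLM K L M Kp Lp emb)
    (β : Ordinal) (hβlim : Order.IsSuccLimit β) (hβ : β < (Cardinal.aleph 1).ord)
    (γf νf : Ordinal → Ordinal) (Bf Ff : Ordinal → Ordinal → Set α)
    (happrox : ∀ a < β, IsApprox K L M Kp Lp emb (γf a) (νf a) (Bf a) (Ff a))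
    (hmono : ∀ a1 a2 : Ordinal, a1 ≤ a2 → a2 < β →
      ApproxLE K L M Kp Lp emb (γf a1) (νf a1) (Bf a1) (Ff a1)
        (γf a2) (νf a2) (Bf a2) (Ff a2)) :
    -- the limit description ⟨X^β, ℬ^β⟩:
    (∀ a < β, ∀ y < γf a,
      (MemKK K Kp (Ff a y) →
        ConvIn (⋃ a' ∈ Set.Iio β, carrierOf K L M emb (γf a'))
          (sSup (νf '' Set.Iio β))
          (fun i => ⋃ a' ∈ {a' : Ordinal | a' < β ∧ i < νf a'}, Bf a' i)
          (Ff a y) (emb y)) ∧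
      ((MemLL L Lp (Ff a y) ∨ Ff a y ⊆ M) →
        emb y ∈ accIn (⋃ a' ∈ Set.Iio β, carrierOf K L M emb (γf a'))
          (sSup (νf '' Set.Iio β))
          (fun i => ⋃ a' ∈ {a' : Ordinal | a' < β ∧ i < νf a'}, Bf a' i)
          (Ff a y))) ∧
    (∃ (γb : Ordinal) (Fb : Ordinal → Set α),
      carrierOf K L M emb γb = (⋃ a' ∈ Set.Iio β, carrierOf K L M emb (γf a')) ∧
      IsApprox K L M Kp Lp emb γb (sSup (νf '' Set.Iio β))
        (fun i => ⋃ a' ∈ {a' : Ordinal | a' < β ∧ i < νf a'}, Bf a' i) Fb ∧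
      ∀ a < β, ApproxLE K L M Kp Lp emb (γf a) (νf a) (Bf a) (Ff a)
        γb (sSup (νf '' Set.Iio β))
        (fun i => ⋃ a' ∈ {a' : Ordinal | a' < β ∧ i < νf a'}, Bf a' i) Fb) := by
  obtain ⟨hKc, -, hLc, -, hMc, -, hKL, hKM, -⟩ := hsetup
  have hγbdd : BddAbove (γf '' Set.Iio β) :=
    ⟨_, forall_mem_image.2 fun a ha => (happrox a ha).1.le⟩
  have hγlt : limIndex β γf < (Cardinal.aleph 1).ord :=
    sSup_image_Iio_lt_omega_one hβ fun a ha => (happrox a ha).1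
  have hcarrier : carrierOf K L M emb (limIndex β γf) = _ :=
    carrierOf_limIndex hβlim.pos hγbdd
  choose! Fb hFb using fun y (hy : y < limIndex β γf) =>
    exists_limit_F happrox hmono hKL hKM hβ hy
  refine ⟨fun a ha y hy => ⟨convIn_limCarrier_of_memKK happrox hmono ha hy,
      mem_accIn_limCarrier_of_memLM happrox hmono ha hy⟩,
    limIndex β γf, Fb, hcarrier, ⟨hγlt, limIndex_lt_omega_one happrox hβ,
      ((hKc.union hLc).union hMc).union ((countable_Iio_of_lt_omega_one hγlt).image emb),
      hcarrier ▸ isDescription_limCarrier_of_approx happrox hmono,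
      fun y hy => hcarrier ▸ (hFb y hy).1,
      fun i hi => infinite_limBase_inter happrox hi⟩,
    fun a ha => ⟨le_limIndex hγbdd ha,
      hcarrier ▸ descLE_limCarrier (descLE_of_approxLE hmono) (bddAbove_image_index happrox) ha,
      fun y hy => (hFb y (hy.trans_le (le_limIndex hγbdd ha))).2 a ha hy⟩⟩
end

section
/- Fix K, L, M, the partitions {K_n}, {L_n}, and the families 𝒦, ℒ, ℳ. Let 𝔸⁰ = ⟨X⁰, ℬ⁰, ℱ⁰⟩ be an approximation and let ⟨H₀, H₁⟩ be a partition of X⁰ such that for some n ∈ ω: (1) H_i ∩ D is infinite for each i < 2 and each infinite D ∈ 𝒟(𝔸⁰, n), and (2) F⁰_y ⊆* H_i for each i < 2 and each y ∈ H_i ∩ γ⁰. Then there is an approximation 𝔸¹ ⪰ 𝔸⁰, with the same underlying set X⁰ and the same family ℱ⁰, such that H₀ and H₁ belong to ℬ¹. -/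
/-- The family `𝒟(𝔸, n) = {B ∩ K_j, B ∩ L_j, B ∩ M : B ∈ ℬ, n ≤ j < ω}` associated to an
approximation with base `⟨B i : i < ν⟩`. -/
def DDfam {α : Type*} (M : Set α) (Kp Lp : ℕ → Set α)
    (ν : Ordinal) (B : Ordinal → Set α) (n : ℕ) : Set (Set α) :=
  {D | ∃ i < ν, (∃ j : ℕ, n ≤ j ∧ D = B i ∩ Kp j) ∨
                (∃ j : ℕ, n ≤ j ∧ D = B i ∩ Lp j) ∨ D = B i ∩ M}

/-!
Refine the base by the partition: the new basic sets are `P ∩ Q` with `P` an old basic set or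
`X⁰`, and `Q ∈ {X⁰, H₀, H₁}`. The sets `H₀, H₁` are complements of each other, so the new
base still consists of clopen sets, and the old basic sets survive as `B ∩ X⁰`. Hypothesis (2)
says that each `F⁰_y` still converges to `y`, and hypothesis (1) that each new basic set still
meets `M` and almost all `K_n`, `L_n` in infinite sets.
-/

open Set

namespace Ordinal

variable {β : Type*}

theorem image2_Iio_eq_image_Iio_mul (f : Ordinal → Ordinal → β) {b : Ordinal} (hb : b ≠ 0)
    (c : Ordinal) :
    image2 f (Iio b) (Iio c) = (fun i => f (i % b) (i / b)) '' Iio (b * c) := by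
  ext z
  simp only [mem_image2, mem_image, mem_Iio]
  constructor
  · rintro ⟨p, hp, q, hq, rfl⟩
    refine ⟨b * q + p, ?_, ?_⟩
    · calc b * q + p < b * q + b := add_lt_add_right hp _
        _ = b * Order.succ q := (mul_succ b q).symm
        _ ≤ b * c := mul_le_mul_right (Order.succ_le_of_lt hq) b
    · rw [mul_add_mod_self, mod_eq_of_lt hp, mul_add_div _ hb, div_eq_zero_of_lt hp, add_zero]
  · rintro ⟨i, hi, rfl⟩
    exact ⟨_, mod_lt i hb, _, (lt_mul_iff_div_lt hb).1 hi, rfl⟩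

noncomputable def extendBy (ν : Ordinal) (f : Ordinal → β) (b : β) (i : Ordinal) : β :=
  if i < ν then f i else b

theorem extendBy_of_lt {ν i : Ordinal} (f : Ordinal → β) (b : β) (hi : i < ν) :
    extendBy ν f b i = f i :=
  if_pos hi

theorem image_extendBy_Iio_add_one (ν : Ordinal) (f : Ordinal → β) (b : β) :
    extendBy ν f b '' Iio (ν + 1) = insert b (f '' Iio ν) := by
  ext z
  simp only [mem_image, mem_Iio, mem_insert_iff, Order.lt_add_one_iff, extendBy]
  constructor
  · rintro ⟨i, hi, rfl⟩
    split_ifs with h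
    exacts [Or.inr ⟨i, h, rfl⟩, Or.inl rfl]
  · rintro (rfl | ⟨i, hi, rfl⟩)
    exacts [⟨ν, le_rfl, if_neg (lt_irrefl ν)⟩, ⟨i, hi.le, if_pos hi⟩]

noncomputable def threeValued (a b c : β) (q : Ordinal) : β :=
  if q = 0 then a else if q = 1 then b else c

theorem image_threeValued_Iio_three (a b c : β) :
    threeValued a b c '' Iio 3 = {a, b, c} := by
  ext z
  simp only [mem_image, mem_Iio, mem_insert_iff, mem_singleton_iff, threeValued]
  constructor
  · rintro ⟨q, -, rfl⟩
    split_ifs <;> simp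
  · rintro (rfl | rfl | rfl)
    exacts [⟨0, by norm_num, by simp⟩, ⟨1, by norm_num, by simp⟩, ⟨2, by norm_num, by simp⟩]

theorem add_one_mul_natCast_lt_ord_aleph_one {ν : Ordinal} (hν : ν < (Cardinal.aleph 1).ord)
    (k : ℕ) : (ν + 1) * k < (Cardinal.aleph 1).ord := by
  have hω₁ := Cardinal.aleph0_le_aleph 1
  have hnat (m : ℕ) : (m : Ordinal) < (Cardinal.aleph 1).ord :=
    (natCast_lt_omega0 m).trans_le (Cardinal.omega0_le_ord.2 hω₁)
  exact isPrincipal_mul_ord hω₁ (isPrincipal_add_ord hω₁ hν (by simpa using hnat 1)) (hnat k)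

end Ordinal

open Ordinal

section

variable {α : Type*}

/-- Enumerates `{P ∩ Q : P ∈ ℬ ∪ {X}, Q ∈ {X, H₀, H₁}}` along `(ν + 1) * 3`, reading `P` off
`i % (ν + 1)` and `Q` off `i / (ν + 1)`, so that below `ν` it is `B ∩ X`. -/
noncomputable def refineBase (X H0 H1 : Set α) (ν : Ordinal) (B : Ordinal → Set α)
    (i : Ordinal) : Set α :=
  extendBy ν B X (i % (ν + 1)) ∩ threeValued X H0 H1 (i / (ν + 1))

theorem image_refineBase (X H0 H1 : Set α) (ν : Ordinal) (B : Ordinal → Set α) :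
    refineBase X H0 H1 ν B '' Iio ((ν + 1) * 3) =
      image2 (· ∩ ·) (insert X (B '' Iio ν)) {X, H0, H1} := by
  rw [← image_extendBy_Iio_add_one, ← image_threeValued_Iio_three, image2_image_left,
    image2_image_right, image2_Iio_eq_image_Iio_mul _ (add_pos_of_right one_pos ν).ne']
  rfl

theorem refineBase_of_lt (X H0 H1 : Set α) {ν i : Ordinal} (B : Ordinal → Set α) (hi : i < ν) :
    refineBase X H0 H1 ν B i = B i ∩ X := by
  have hi' : i < ν + 1 := hi.trans (lt_add_one ν)
  simp only [refineBase, mod_eq_of_lt hi', div_eq_zero_of_lt hi', extendBy_of_lt B X hi,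
    threeValued, ↓reduceIte]

section Topology

variable {X U V : Set α} {ν μ : Ordinal} {B C : Ordinal → Set α}

theorem IsOpenIn.mono (hBC : B '' Iio ν ⊆ C '' Iio μ) (hU : IsOpenIn X ν B U) :
    IsOpenIn X μ C U := by
  refine ⟨hU.1, fun x hx => ?_⟩
  obtain ⟨i, hi, hxi, hiU⟩ := hU.2 x hx
  obtain ⟨j, hj, hji⟩ := hBC (mem_image_of_mem B hi)
  exact ⟨j, hj, hji ▸ hxi, hji ▸ hiU⟩

theorem IsOpenIn.union (hU : IsOpenIn X ν B U) (hV : IsOpenIn X ν B V) :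
    IsOpenIn X ν B (U ∪ V) := by
  refine ⟨union_subset hU.1 hV.1, ?_⟩
  rintro x (hx | hx)
  · obtain ⟨i, hi, hxi, hiU⟩ := hU.2 x hx
    exact ⟨i, hi, hxi, hiU.trans subset_union_left⟩
  · obtain ⟨i, hi, hxi, hiV⟩ := hV.2 x hx
    exact ⟨i, hi, hxi, hiV.trans subset_union_right⟩

theorem isOpenIn_empty : IsOpenIn X ν B ∅ :=
  ⟨empty_subset X, fun _ hx => hx.elim⟩

theorem isOpenIn_of_mem_image {S : Set α} (hS : S ∈ B '' Iio ν) (hSX : S ⊆ X) :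
    IsOpenIn X ν B S := by
  obtain ⟨i, hi, rfl⟩ := hS
  exact ⟨hSX, fun x hx => ⟨i, hi, hx, subset_rfl⟩⟩

theorem ConvIn.of_forall_basic {A : Set α} {x : α}
    (h : ∀ i < ν, x ∈ B i → (A \ B i).Finite) : ConvIn X ν B A x := by
  intro U hU hxU
  obtain ⟨i, hi, hxi, hiU⟩ := hU.2 x hxU
  exact (h i hi hxi).subset (sdiff_subset_sdiff_right hiU)

end Topology

section InterBase

def IsInterBase (𝓑 : Set (Set α)) : Prop :=
  ∀ S ∈ 𝓑, ∀ T ∈ 𝓑, ∀ x ∈ S ∩ T, ∃ R ∈ 𝓑, x ∈ R ∧ R ⊆ S ∩ T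

variable {𝓑 𝓒 : Set (Set α)}

theorem isInterBase_image_iff {ν : Ordinal} {B : Ordinal → Set α} :
    IsInterBase (B '' Iio ν) ↔
      ∀ i < ν, ∀ j < ν, ∀ x ∈ B i ∩ B j, ∃ k < ν, x ∈ B k ∧ B k ⊆ B i ∩ B j := by
  simp [IsInterBase]

theorem IsInterBase.insert_of_forall_subset {X : Set α} (h : IsInterBase 𝓑) (hX : ∀ S ∈ 𝓑, S ⊆ X) :
    IsInterBase (insert X 𝓑) := by
  have hX' : ∀ S ∈ insert X 𝓑, S ⊆ X := by
    rintro S (rfl | hS)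
    exacts [subset_rfl, hX S hS]
  intro S hS T hT x hx
  rcases hS with rfl | hS
  · exact ⟨T, hT, hx.2, subset_inter (hX' T hT) subset_rfl⟩
  rcases hT with rfl | hT
  · exact ⟨S, mem_insert_of_mem _ hS, hx.1, subset_inter subset_rfl (hX S hS)⟩
  · obtain ⟨R, hR, hxR, hRST⟩ := h S hS T hT x hx
    exact ⟨R, mem_insert_of_mem _ hR, hxR, hRST⟩

theorem isInterBase_of_pairwiseDisjoint (h : 𝓑.PairwiseDisjoint id) : IsInterBase 𝓑 := by
  intro S hS T hT x hx
  obtain rfl : S = T := h.elim hS hT (not_disjoint_iff.2 ⟨x, hx.1, hx.2⟩)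
  exact ⟨S, hS, hx.1, by rw [inter_self]⟩

theorem IsInterBase.image2_inter (h𝓑 : IsInterBase 𝓑) (h𝓒 : IsInterBase 𝓒) :
    IsInterBase (image2 (· ∩ ·) 𝓑 𝓒) := by
  rintro _ ⟨P, hP, Q, hQ, rfl⟩ _ ⟨P', hP', Q', hQ', rfl⟩ x ⟨⟨hxP, hxQ⟩, hxP', hxQ'⟩
  obtain ⟨R, hR, hxR, hRP⟩ := h𝓑 P hP P' hP' x ⟨hxP, hxP'⟩
  obtain ⟨S, hS, hxS, hSQ⟩ := h𝓒 Q hQ Q' hQ' x ⟨hxQ, hxQ'⟩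
  refine ⟨R ∩ S, mem_image2_of_mem hR hS, ⟨hxR, hxS⟩, ?_⟩
  rintro z ⟨hzR, hzS⟩
  exact ⟨⟨(hRP hzR).1, (hSQ hzS).1⟩, (hRP hzR).2, (hSQ hzS).2⟩

end InterBase

section Refinement

variable {X H0 H1 : Set α} {ν μ : Ordinal} {B C : Ordinal → Set α}

theorem IsDescription.ne_zero (hd : IsDescription X ν B) (hX : X.Nonempty) : ν ≠ 0 := by
  rintro rfl
  obtain ⟨x, hx⟩ := hX
  rw [← hd.2.1] at hx
  simp at hx

theorem image_subset_image2_inter_insert (hsub : ∀ i < ν, B i ⊆ X) {𝒬 : Set (Set α)}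
    (hX : X ∈ 𝒬) : B '' Iio ν ⊆ image2 (· ∩ ·) (insert X (B '' Iio ν)) 𝒬 := by
  rintro _ ⟨i, hi, rfl⟩
  exact ⟨B i, mem_insert_of_mem _ (mem_image_of_mem B hi), X, hX, inter_eq_left.2 (hsub i hi)⟩

theorem mem_image2_inter_insert_of_subset {𝓑 𝒬 : Set (Set α)} {Q : Set α} (hQ : Q ∈ 𝒬)
    (hQX : Q ⊆ X) : Q ∈ image2 (· ∩ ·) (insert X 𝓑) 𝒬 :=
  ⟨X, mem_insert X 𝓑, Q, hQ, inter_eq_right.2 hQX⟩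

theorem isOpenIn_sdiff_of_refine_partition (hsub : ∀ i < ν, B i ⊆ X)
    (hcompl : ∀ i < ν, IsOpenIn X ν B (X \ B i)) (hU : H0 ∪ H1 = X) (hD : Disjoint H0 H1)
    (hC : C '' Iio μ = image2 (· ∩ ·) (insert X (B '' Iio ν)) {X, H0, H1}) {i : Ordinal}
    (hi : i < μ) : IsOpenIn X μ C (X \ C i) := by
  have hold : B '' Iio ν ⊆ C '' Iio μ := hC ▸ image_subset_image2_inter_insert hsub (by simp)
  have hpiece : ∀ H ∈ ({H0, H1} : Set (Set α)), IsOpenIn X μ C H := by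
    intro H hH
    have hHX : H ⊆ X := by
      rw [← hU]
      rcases hH with rfl | rfl
      exacts [subset_union_left, subset_union_right]
    exact isOpenIn_of_mem_image (hC ▸ mem_image2_inter_insert_of_subset (by simp [hH]) hHX) hHX
  obtain ⟨P, hP, Q, hQ, hPQ⟩ := hC ▸ mem_image_of_mem C hi
  rw [← show P ∩ Q = C i from hPQ, sdiff_inter]
  refine IsOpenIn.union ?_ ?_
  · rcases hP with rfl | ⟨j, hj, rfl⟩
    · exact sdiff_self ▸ isOpenIn_empty
    · exact (hcompl j hj).mono hold
  · have hH0 : X \ H0 = H1 := by rw [← hU, union_sdiff_left, hD.symm.sdiff_eq_left]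
    have hH1 : X \ H1 = H0 := by rw [← hU, union_sdiff_right, hD.sdiff_eq_left]
    rcases hQ with rfl | rfl | rfl
    · exact sdiff_self ▸ isOpenIn_empty
    · exact hH0 ▸ hpiece _ (by simp)
    · exact hH1 ▸ hpiece _ (by simp)

theorem IsDescription.refine_partition (hd : IsDescription X ν B) (hU : H0 ∪ H1 = X)
    (hD : Disjoint H0 H1)
    (hC : C '' Iio μ = image2 (· ∩ ·) (insert X (B '' Iio ν)) {X, H0, H1}) :
    IsDescription X μ C := by
  obtain ⟨hsub, hcover, hbase, hcompl, hhaus⟩ := hd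
  have hH0 : H0 ⊆ X := hU ▸ subset_union_left
  have hH1 : H1 ⊆ X := hU ▸ subset_union_right
  have hold : B '' Iio ν ⊆ C '' Iio μ := hC ▸ image_subset_image2_inter_insert hsub (by simp)
  have hCX : ∀ S ∈ C '' Iio μ, S ⊆ X := by
    rw [hC]
    rintro _ ⟨P, -, Q, hQ, rfl⟩
    rcases hQ with rfl | rfl | rfl
    exacts [inter_subset_right, inter_subset_right.trans hH0, inter_subset_right.trans hH1]
  refine ⟨fun i hi => hCX _ (mem_image_of_mem C hi), ?_, ?_,
    fun i hi => isOpenIn_sdiff_of_refine_partition hsub hcompl hU hD hC hi, ?_⟩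
  · rw [← sUnion_image] at hcover ⊢
    exact (sUnion_subset hCX).antisymm (hcover ▸ sUnion_mono hold)
  · rw [← isInterBase_image_iff, hC]
    refine ((isInterBase_image_iff.2 hbase).insert_of_forall_subset ?_).image2_inter
      ((isInterBase_of_pairwiseDisjoint ?_).insert_of_forall_subset ?_)
    · rintro _ ⟨i, hi, rfl⟩
      exact hsub i hi
    · exact pairwise_pair.2 fun _ => ⟨hD, hD.symm⟩
    · rintro _ (rfl | rfl)
      exacts [hH0, hH1]
  · intro x hx y hy hxy
    obtain ⟨i, hi, j, hj, hxi, hyj, hij⟩ := hhaus x hx y hy hxy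
    obtain ⟨i', hi', hi'i⟩ := hold (mem_image_of_mem B hi)
    obtain ⟨j', hj', hj'j⟩ := hold (mem_image_of_mem B hj)
    exact ⟨i', hi', j', hj', hi'i ▸ hxi, hj'j ▸ hyj, hi'i ▸ hj'j ▸ hij⟩

theorem ConvIn.refine_partition {A : Set α} {x : α} (hconv : ConvIn X ν B A x)
    (hsub : ∀ i < ν, B i ⊆ X) (hAX : A ⊆ X) (h0 : x ∈ H0 → (A \ H0).Finite)
    (h1 : x ∈ H1 → (A \ H1).Finite)
    (hC : C '' Iio μ = image2 (· ∩ ·) (insert X (B '' Iio ν)) {X, H0, H1}) :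
    ConvIn X μ C A x := by
  refine ConvIn.of_forall_basic fun i hi hx => ?_
  obtain ⟨P, hP, Q, hQ, hPQ⟩ := hC ▸ mem_image_of_mem C hi
  rw [← hPQ] at hx ⊢
  rw [sdiff_inter]
  refine Finite.union ?_ ?_
  · rcases hP with hP | ⟨j, hj, hP⟩
    · rw [hP]
      exact sdiff_eq_empty.2 hAX ▸ finite_empty
    · rw [← hP]
      exact hconv _ (isOpenIn_of_mem_image (mem_image_of_mem B hj) (hsub j hj)) (hP ▸ hx.1)
  · rcases hQ with hQ | hQ | hQ <;> rw [hQ] at hx ⊢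
    exacts [sdiff_eq_empty.2 hAX ▸ finite_empty, h0 hx.2, h1 hx.2]

end Refinement

def IsAmple (M : Set α) (Kp Lp : ℕ → Set α) (S : Set α) : Prop :=
  (S ∩ M).Infinite ∧ ∃ N : ℕ, ∀ n ≥ N, (S ∩ Kp n).Infinite ∧ (S ∩ Lp n).Infinite

section Ample

variable {M : Set α} {Kp Lp : ℕ → Set α}

theorem IsAmple.mono {S T : Set α} (h : IsAmple M Kp Lp S) (hST : S ⊆ T) : IsAmple M Kp Lp T := by
  obtain ⟨hM, N, hN⟩ := h
  exact ⟨hM.mono (inter_subset_inter_left M hST), N, fun n hn =>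
    ⟨(hN n hn).1.mono (inter_subset_inter_left _ hST),
      (hN n hn).2.mono (inter_subset_inter_left _ hST)⟩⟩

theorem IsAmple.inter_of_forall_DDfam {ν : Ordinal} {B : Ordinal → Set α} {n : ℕ} {Q : Set α}
    {j : Ordinal} (hj : j < ν) (hB : IsAmple M Kp Lp (B j))
    (hQ : ∀ D ∈ DDfam M Kp Lp ν B n, D.Infinite → (Q ∩ D).Infinite) :
    IsAmple M Kp Lp (B j ∩ Q) := by
  obtain ⟨hM, N, hN⟩ := hB
  have hE : ∀ E, B j ∩ E ∈ DDfam M Kp Lp ν B n → (B j ∩ E).Infinite →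
      (B j ∩ Q ∩ E).Infinite := by
    intro E hD hDinf
    rw [inter_right_comm, inter_comm]
    exact hQ _ hD hDinf
  refine ⟨hE M ⟨j, hj, Or.inr (Or.inr rfl)⟩ hM, max N n, fun m hm => ⟨?_, ?_⟩⟩
  · exact hE _ ⟨j, hj, Or.inl ⟨m, le_of_max_le_right hm, rfl⟩⟩ (hN m (le_of_max_le_left hm)).1
  · exact hE _ ⟨j, hj, Or.inr (Or.inl ⟨m, le_of_max_le_right hm, rfl⟩)⟩
      (hN m (le_of_max_le_left hm)).2

theorem subset_of_mem_DDfam {X : Set α} {ν : Ordinal} {B : Ordinal → Set α} {n : ℕ} {D : Set α}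
    (hsub : ∀ i < ν, B i ⊆ X) (hD : D ∈ DDfam M Kp Lp ν B n) : D ⊆ X := by
  obtain ⟨i, hi, ⟨j, -, rfl⟩ | ⟨j, -, rfl⟩ | rfl⟩ := hD <;>
    exact inter_subset_left.trans (hsub i hi)

theorem isAmple_of_mem_refinement {X H0 H1 : Set α} {ν : Ordinal} {B : Ordinal → Set α} {n : ℕ}
    (hsub : ∀ i < ν, B i ⊆ X) (hν : ν ≠ 0) (hB : ∀ i < ν, IsAmple M Kp Lp (B i))
    (hH : ∀ D ∈ DDfam M Kp Lp ν B n, D.Infinite → (H0 ∩ D).Infinite ∧ (H1 ∩ D).Infinite) :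
    ∀ S ∈ image2 (· ∩ ·) (insert X (B '' Iio ν)) {X, H0, H1}, IsAmple M Kp Lp S := by
  rintro _ ⟨P, hP, Q, hQ, rfl⟩
  obtain ⟨j, hj, hjP⟩ : ∃ j < ν, B j ⊆ P := by
    rcases hP with rfl | ⟨j, hj, rfl⟩
    · exact ⟨0, pos_iff_ne_zero.2 hν, hsub 0 (pos_iff_ne_zero.2 hν)⟩
    · exact ⟨j, hj, subset_rfl⟩
  have hQD : ∀ D ∈ DDfam M Kp Lp ν B n, D.Infinite → (Q ∩ D).Infinite := by
    intro D hD hDinf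
    rcases hQ with rfl | rfl | rfl
    exacts [(inter_eq_right.2 (subset_of_mem_DDfam hsub hD)).symm ▸ hDinf, (hH D hD hDinf).1,
      (hH D hD hDinf).2]
  exact ((hB j hj).inter_of_forall_DDfam hj hQD).mono (inter_subset_inter_left Q hjP)

end Ample

theorem descLE_of_eqOn {X : Set α} {ν0 ν1 : Ordinal} {B0 B1 : Ordinal → Set α} (hle : ν0 ≤ ν1)
    (hsub : ∀ i < ν0, B0 i ⊆ X) (h : ∀ i < ν0, B1 i = B0 i) : DescLE X ν0 B0 X ν1 B1 :=
  ⟨subset_rfl, hle, fun i hi => by rw [h i hi, inter_eq_left.2 (hsub i hi)],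
    fun i hi j hj => by rw [h i hi, h j hj], fun i hi j hj => by rw [h i hi, h j hj]⟩

section Approximation

variable {K L M : Set α} {Kp Lp : ℕ → Set α} {emb : Ordinal → α} {γ : Ordinal}

theorem approxLE_of_descLE {ν0 ν1 : Ordinal} {B0 B1 F : Ordinal → Set α}
    (h : DescLE (carrierOf K L M emb γ) ν0 B0 (carrierOf K L M emb γ) ν1 B1) :
    ApproxLE K L M Kp Lp emb γ ν0 B0 F γ ν1 B1 F :=
  ⟨le_rfl, h, fun _ _ => ⟨fun _ => rfl, fun _ => by simp⟩⟩

theorem subset_carrierOf {A : Set α} (hA : MemKK K Kp A ∨ MemLL L Lp A ∨ A ⊆ M) :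
    A ⊆ carrierOf K L M emb γ := by
  rcases hA with ⟨hA, -⟩ | ⟨hA, -⟩ | hA <;> exact fun x hx => by simp [carrierOf, hA hx]

end Approximation

end

/-- Lemma `lm:a0a1partition`.  Let `𝔸⁰` be an approximation and `⟨H₀, H₁⟩` a partition
of its underlying set `X⁰` such that for some `n ∈ ω`: (1) `H_i ∩ D` is infinite for
each `i < 2` and each infinite `D ∈ 𝒟(𝔸⁰, n)`, and (2) `F⁰_y ⊆* H_i` for each `i < 2`
and each `y ∈ H_i ∩ γ⁰`.  Then there is an approximation `𝔸¹ ⪰ 𝔸⁰` with the same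
underlying set and the same family `ℱ⁰` such that `H₀, H₁ ∈ ℬ¹`. -/
theorem partition_approx {α : Type*} (K L M : Set α) (Kp Lp : ℕ → Set α)
    (emb : Ordinal → α) (hsetup : SetupKLM K L M Kp Lp emb)
    (γ0 ν0 : Ordinal) (B0 F0 : Ordinal → Set α)
    (h0 : IsApprox K L M Kp Lp emb γ0 ν0 B0 F0)
    (H0 H1 : Set α) (n : ℕ)
    (hpartU : H0 ∪ H1 = carrierOf K L M emb γ0)
    (hpartD : Disjoint H0 H1)
    (h1 : ∀ D ∈ DDfam M Kp Lp ν0 B0 n, D.Infinite →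
      (H0 ∩ D).Infinite ∧ (H1 ∩ D).Infinite)
    (h2 : ∀ y < γ0, (emb y ∈ H0 → (F0 y \ H0).Finite) ∧
      (emb y ∈ H1 → (F0 y \ H1).Finite)) :
    ∃ (ν1 : Ordinal) (B1 : Ordinal → Set α),
      IsApprox K L M Kp Lp emb γ0 ν1 B1 F0 ∧
      ApproxLE K L M Kp Lp emb γ0 ν0 B0 F0 γ0 ν1 B1 F0 ∧
      (∃ i < ν1, B1 i = H0) ∧ (∃ i < ν1, B1 i = H1) := by
  obtain ⟨hγ, hν, hXc, hdesc, hF, hB⟩ := h0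
  obtain ⟨-, -, -, -, -, hMinf, -⟩ := hsetup
  set X := carrierOf K L M emb γ0
  have hsub : ∀ i < ν0, B0 i ⊆ X := hdesc.1
  have hB1 := image_refineBase X H0 H1 ν0 B0
  have hν0 : ν0 ≠ 0 := hdesc.ne_zero (hMinf.nonempty.mono fun _ hx => Or.inl (Or.inr hx))
  have hν1 : (ν0 + 1) * 3 < (Cardinal.aleph 1).ord := by
    simpa using add_one_mul_natCast_lt_ord_aleph_one hν 3
  have hmem : ∀ H ∈ ({H0, H1} : Set (Set α)), H ⊆ X →
      H ∈ refineBase X H0 H1 ν0 B0 '' Iio ((ν0 + 1) * 3) :=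
    fun H hH hHX => hB1 ▸ mem_image2_inter_insert_of_subset (mem_insert_of_mem X hH) hHX
  refine ⟨(ν0 + 1) * 3, refineBase X H0 H1 ν0 B0,
    ⟨hγ, hν1, hXc, hdesc.refine_partition hpartU hpartD hB1, fun y hy => ?_, fun i hi => ?_⟩, ?_,
    hmem H0 (by simp) (hpartU ▸ subset_union_left), hmem H1 (by simp) (hpartU ▸ subset_union_right)⟩
  · obtain ⟨hinf, hKLM, hconv⟩ := hF y hy
    exact ⟨hinf, hKLM, hconv.refine_partition hsub (subset_carrierOf hKLM) (h2 y hy).1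
      (h2 y hy).2 hB1⟩
  · exact isAmple_of_mem_refinement hsub hν0 hB h1 _ (hB1 ▸ mem_image_of_mem _ hi)
  · refine approxLE_of_descLE (descLE_of_eqOn (le_self_add.trans (le_mul_left _ (by norm_num)))
      hsub fun i hi => ?_)
    rw [refineBase_of_lt X H0 H1 B0 hi, inter_eq_left.2 (hsub i hi)]
end
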